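/- arXiv:2307.12550 — 11 statements merged into one kernel-verified Lean document; each statement's English description precedes it below -/
import Mathlib

section
/- Let G be a finite group whose p-Sylow subgroup S_p is normal, for a prime divisor p of #G. Then for any subgroup D of G and any g ∈ G, the subgroup S_p ∩ gDg⁻¹ has index p^(ord_p(G:D)) in S_p, where ord_p denotes the p-adic valuation. -/
/-!
Computing the index of `H ⊓ S` in two ways gives `(S : H ⊓ S) (G : S) = (H : H ⊓ S) (G : H)`.
Since `S` is a normal Sylow subgroup, `(G : S)` and its divisor `(H : H ⊓ S) = (HS : S)` are prime
to `p`, so the `p`-parts of `(S : H ⊓ S)` and `(G : H)` agree; and `(S : H ⊓ S)` is a power of `p`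
because `S` is a `p`-group. Conjugation does not change `(G : D)`.
-/

namespace Subgroup

variable {G : Type*} [Group G]

theorem relIndex_mul_index_comm (H K : Subgroup G) :
    H.relIndex K * K.index = K.relIndex H * H.index := by
  rw [← inf_relIndex_right H K, ← inf_relIndex_right K H, relIndex_mul_index inf_le_right,
    relIndex_mul_index inf_le_right, inf_comm]

theorem factorization_relIndex_of_not_dvd_index (H : Subgroup G) [H.FiniteIndex] {N : Subgroup G}
    [N.Normal] {p : ℕ} (hN : ¬p ∣ N.index) :
    (H.relIndex N).factorization p = H.index.factorization p := by
  have hNH : ¬p ∣ N.relIndex H := fun h => hN (h.trans (relIndex_dvd_index_of_normal N H))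
  have hNH0 : N.relIndex H ≠ 0 := fun h => hNH (h ▸ dvd_zero p)
  have key := relIndex_mul_index_comm H N
  have h0 : H.relIndex N * N.index ≠ 0 := key ▸ mul_ne_zero hNH0 FiniteIndex.index_ne_zero
  have := congrArg (·.factorization p) key
  simpa [Nat.factorization_mul, left_ne_zero_of_mul h0, right_ne_zero_of_mul h0, hNH0,
    FiniteIndex.index_ne_zero, Nat.factorization_eq_zero_of_not_dvd hN,
    Nat.factorization_eq_zero_of_not_dvd hNH] using this

end Subgroup

theorem Sylow.relIndex_eq_pow_factorization_index {G : Type*} [Group G] [Finite G] {p : ℕ}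
    [hp : Fact p.Prime] (P : Sylow p G) [P.Normal] (H : Subgroup G) :
    H.relIndex P = p ^ H.index.factorization p := by
  obtain ⟨k, hk⟩ := P.isPGroup'.index (H.subgroupOf P)
  rw [← H.factorization_relIndex_of_not_dvd_index P.not_dvd_index, Subgroup.relIndex, hk,
    Nat.factorization_pow_self hp.out]

theorem relindex_conj_eq_pow_of_normal_sylow_general {G : Type*} [Group G] [Finite G]
    (p : ℕ) [Fact p.Prime]
    (S : Sylow p G) (hS : (S : Subgroup G).Normal)
    (D : Subgroup G) (g : G) :
    (Subgroup.map (MulAut.conj g).toMonoidHom D).relIndex (S : Subgroup G) =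
      p ^ (D.index.factorization p) := by
  rw [S.relIndex_eq_pow_factorization_index, ← D.index_map_equiv (MulAut.conj g)]
  rfl

/-- Lemma 4.3(ii): if the `p`-Sylow subgroup `S_p` of `G` is normal, then for any
subgroup `D` and any `g ∈ G`, the subgroup `S_p ∩ gDg⁻¹` has index `p ^ ord_p (G : D)`
in `S_p`. -/
theorem relindex_conj_eq_pow_of_normal_sylow {G : Type*} [Group G] [Finite G]
    (p : ℕ) [Fact p.Prime] (hdvd : p ∣ Nat.card G)
    (S : Sylow p G) (hS : (S : Subgroup G).Normal)
    (D : Subgroup G) (g : G) :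
    (Subgroup.map (MulAut.conj g).toMonoidHom D).relIndex (S : Subgroup G) =
      p ^ (D.index.factorization p) :=
  relindex_conj_eq_pow_of_normal_sylow_general p S hS D g
end

section
/- Let G be a finite group with a normal abelian p-Sylow subgroup S_p, and fix a complement G' so that G = S_p ⋊ G'. Then for any subgroup D of G there exist a subgroup D' of G' and an element s ∈ S_p such that sDs⁻¹ = (S_p ∩ D) ⋊ D' inside G. -/
/-!
Schur–Zassenhaus inside `D` gives `D = (S ⊓ D) ⊔ C` with `|C|` prime to `p`. In `M = S ⊔ C`
both `C` and `G' ⊓ M` complement the abelian normal Hall subgroup `S`, so they are conjugate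
by some `s ∈ S` (the abelian case of Schur–Zassenhaus conjugacy, via the transfer-like `diff`
action on transversals). Since `S` is abelian, conjugation by `s` fixes `S ⊓ D`.
-/

open MulAction Pointwise

namespace Subgroup

variable {G : Type*} [Group G]

noncomputable def IsComplement'.toQuotientDiff {H K : Subgroup G} [IsMulCommutative H]
    [H.FiniteIndex] (hK : IsComplement' H K) : H.QuotientDiff :=
  Quotient.mk'' ⟨K, hK.symm⟩

section AbelianConjugacy

variable [Finite G] {H : Subgroup G} [H.Normal] [IsMulCommutative H]

theorem IsComplement'.stabilizer_toQuotientDiff {K : Subgroup G} (hK : IsComplement' H K)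
    (hco : (Nat.card H).Coprime H.index) :
    stabilizer G hK.toQuotientDiff = K := by
  -- `k` acts by right translation by `k⁻¹`, which maps the transversal `K` onto itself.
  have hle : K ≤ stabilizer G hK.toQuotientDiff := fun k hk =>
    congrArg Quotient.mk'' (Subtype.ext (op_smul_coe_set (inv_mem hk)))
  have hstab : IsComplement' H (stabilizer G hK.toQuotientDiff) :=
    isComplement'_stabilizer_of_coprime hco
  refine (eq_of_le_of_card_ge hle (Nat.le_of_mul_le_mul_left ?_ (Nat.card_pos (α := H)))).symm
  rw [hK.card_mul_card, hstab.card_mul_card]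

theorem IsComplement'.exists_map_conj_eq (hco : (Nat.card H).Coprime H.index)
    {K₁ K₂ : Subgroup G} (h₁ : IsComplement' H K₁) (h₂ : IsComplement' H K₂) :
    ∃ h ∈ H, K₁.map (MulAut.conj h).toMonoidHom = K₂ := by
  obtain ⟨h, hh⟩ := exists_smul_eq hco h₁.toQuotientDiff h₂.toQuotientDiff
  refine ⟨h, h.2, ?_⟩
  rw [← h₁.stabilizer_toQuotientDiff hco, ← h₂.stabilizer_toQuotientDiff hco, ← hh]
  exact (stabilizer_smul_eq_stabilizer_map_conj (h : G) _).symm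

end AbelianConjugacy

theorem isComplement'_subgroupOf_sup {H K : Subgroup G} [H.Normal] (h : Disjoint H K) :
    IsComplement' (H.subgroupOf (H ⊔ K)) (K.subgroupOf (H ⊔ K)) := by
  refine isComplement'_of_disjoint_and_mul_eq_univ ?_ (Set.eq_univ_of_forall fun m => ?_)
  · exact disjoint_def.mpr fun ha hb => Subtype.ext (disjoint_def.mp h ha hb)
  · obtain ⟨a, ha, b, hb, hab⟩ : (m : G) ∈ (H : Set G) * K := normal_mul H K ▸ m.2
    exact ⟨⟨a, mem_sup_left ha⟩, ha, ⟨b, mem_sup_right hb⟩, hb, Subtype.ext hab⟩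

theorem map_subtype_map_conj (M : Subgroup G) (h : M) (K : Subgroup M) :
    (K.map (MulAut.conj h).toMonoidHom).map M.subtype =
      (K.map M.subtype).map (MulAut.conj (h : G)).toMonoidHom := by
  simp only [map_map]
  rfl

theorem exists_map_conj_eq_of_sup_eq [Finite G] {H K₁ K₂ : Subgroup G} [H.Normal]
    [IsMulCommutative H] (hco : (Nat.card H).Coprime (Nat.card K₁)) (h₁ : Disjoint H K₁)
    (h₂ : Disjoint H K₂) (hsup : H ⊔ K₁ = H ⊔ K₂) :
    ∃ h ∈ H, K₁.map (MulAut.conj h).toMonoidHom = K₂ := by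
  have c₁ := isComplement'_subgroupOf_sup h₁
  have c₂ := isComplement'_subgroupOf_sup h₂
  rw [← hsup] at c₂
  have hcoM : (Nat.card (H.subgroupOf (H ⊔ K₁))).Coprime (H.subgroupOf (H ⊔ K₁)).index := by
    rwa [c₁.symm.index_eq_card, Nat.card_congr (subgroupOfEquivOfLe le_sup_left).toEquiv,
      Nat.card_congr (subgroupOfEquivOfLe le_sup_right).toEquiv]
  obtain ⟨h, hh, hmap⟩ := c₁.exists_map_conj_eq hcoM c₂
  refine ⟨h, hh, ?_⟩
  have := congrArg (map (H ⊔ K₁).subtype) hmap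
  rwa [map_subtype_map_conj, subgroupOf_map_subtype, subgroupOf_map_subtype,
    inf_of_le_left le_sup_right, inf_of_le_left (hsup ▸ le_sup_right)] at this

theorem exists_le_coprime_inf_sup_eq [Finite G] {N : Subgroup G} [N.Normal]
    (hN : (Nat.card N).Coprime N.index) (D : Subgroup G) :
    ∃ C ≤ D, (Nat.card N).Coprime (Nat.card C) ∧ N ⊓ D ⊔ C = D := by
  have hcard : Nat.card (N.subgroupOf D) ∣ Nat.card N :=
    card_comap_dvd_of_injective N D.subtype D.subtype_injective
  have hcoD := (hN.coprime_dvd_left hcard).coprime_dvd_right (relIndex_dvd_index_of_normal N D)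
  obtain ⟨K, hK⟩ := exists_right_complement'_of_coprime hcoD
  refine ⟨K.map D.subtype, map_subtype_le K, ?_, ?_⟩
  · rw [card_map_of_injective D.subtype_injective, ← hK.symm.index_eq_card]
    exact hN.coprime_dvd_right (relIndex_dvd_index_of_normal N D)
  · have := congrArg (map D.subtype) hK.sup_eq_top
    rwa [map_sup, subgroupOf_map_subtype, ← MonoidHom.range_eq_map, range_subtype] at this

theorem map_conj_eq_self_of_le_centralizer {K : Subgroup G} {g : G}
    (hK : K ≤ centralizer {g}) : K.map (MulAut.conj g).toMonoidHom = K := by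
  have hfix : ∀ k ∈ K, MulAut.conj g k = k := fun k hk => by
    rw [MulAut.conj_apply, ← mem_centralizer_singleton_iff.mp (hK hk), mul_inv_cancel_right]
  ext x
  refine ⟨?_, fun hx => ⟨x, hx, hfix x hx⟩⟩
  rintro ⟨k, hk, rfl⟩
  exact (hfix k hk).symm ▸ hk

theorem sup_inf_assoc_of_le_of_normal {H M : Subgroup G} [H.Normal] (K : Subgroup G)
    (hHM : H ≤ M) : (H ⊔ K) ⊓ M = H ⊔ K ⊓ M :=
  SetLike.coe_injective <| by
    rw [normal_mul, mul_inf_assoc H K M hHM, coe_inf, normal_mul]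

end Subgroup

open Subgroup

/-- Lemma 4.3(iii): if `G = S_p ⋊ G'` with `S_p` a normal abelian `p`-Sylow subgroup
and `G'` a complement, then every subgroup `D` of `G` satisfies
`sDs⁻¹ = (S_p ⊓ D) ⊔ D'` for some `s ∈ S_p` and some subgroup `D' ≤ G'`. -/
theorem conj_subgroup_eq_inf_sup_of_normal_abelian_sylow {G : Type*} [Group G] [Finite G]
    (p : ℕ) [Fact p.Prime]
    (S : Sylow p G) (hS : (S : Subgroup G).Normal)
    (hcomm : IsMulCommutative (S : Subgroup G))
    (G' : Subgroup G) (hcompl : Subgroup.IsComplement' (S : Subgroup G) G')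
    (D : Subgroup G) :
    ∃ D' ≤ G', ∃ s ∈ (S : Subgroup G),
      Subgroup.map (MulAut.conj s).toMonoidHom D = ((S : Subgroup G) ⊓ D) ⊔ D' := by
  set P : Subgroup G := (S : Subgroup G)
  obtain ⟨C, -, hcop, hDC⟩ := exists_le_coprime_inf_sup_eq S.card_coprime_index D
  have hM : P ⊔ C = P ⊔ G' ⊓ (P ⊔ C) := by
    rw [← sup_inf_assoc_of_le_of_normal G' le_sup_left, hcompl.sup_eq_top, top_inf_eq]
  obtain ⟨s, hs, hconj⟩ := exists_map_conj_eq_of_sup_eq hcop (disjoint_of_coprime_natCard hcop)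
    (hcompl.disjoint.mono_right inf_le_left) hM
  have hfix : (P ⊓ D).map (MulAut.conj s).toMonoidHom = P ⊓ D :=
    map_conj_eq_self_of_le_centralizer fun x hx =>
      mem_centralizer_singleton_iff.mpr (setLike_mul_comm hx.1 hs)
  refine ⟨G' ⊓ (P ⊔ C), inf_le_left, s, hs, ?_⟩
  conv_lhs => rw [← hDC]
  rw [Subgroup.map_sup, hfix, hconj]
end

section
/- Let G be a finite group with normal abelian p-Sylow subgroup S_p, and H a subgroup of G with trivial normal core in G. Then the exponent of S_p equals the exponent of the quotient S_p/(S_p ∩ H). -/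
/-!
If every element of `S` has its `n`-th power in `H`, where `n` is the exponent of
`S ⧸ (S ∩ H)`, then by normality of `S` so does every conjugate, hence every `n`-th power
lies in the normal core of `H`, which is trivial.
-/

namespace Subgroup

variable {G : Type*} [Group G] {N H : Subgroup G}

theorem pow_exponent_quotient_subgroupOf_mem [(H.subgroupOf N).Normal] (x : N) :
    (x : G) ^ Monoid.exponent (N ⧸ H.subgroupOf N) ∈ H := by
  have hx : (x : N ⧸ H.subgroupOf N) ^ Monoid.exponent (N ⧸ H.subgroupOf N) = 1 :=
    Monoid.pow_exponent_eq_one _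
  rwa [← QuotientGroup.mk_pow, QuotientGroup.eq_one_iff, mem_subgroupOf, coe_pow] at hx

theorem pow_mem_normalCore_of_forall_pow_mem [N.Normal] {n : ℕ} (hpow : ∀ y ∈ N, y ^ n ∈ H)
    {x : G} (hx : x ∈ N) : x ^ n ∈ H.normalCore := fun g => by
  simpa only [conj_pow] using hpow _ (Normal.conj_mem ‹_› x hx g)

theorem exponent_quotient_subgroupOf_eq_of_normalCore_eq_bot [N.Normal]
    [(H.subgroupOf N).Normal] (hH : H.normalCore = ⊥) :
    Monoid.exponent (N ⧸ H.subgroupOf N) = Monoid.exponent N := by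
  refine Nat.dvd_antisymm (Group.exponent_quotient_dvd _)
    (Monoid.exponent_dvd_of_forall_pow_eq_one fun x => Subtype.ext ?_)
  have hcore := pow_mem_normalCore_of_forall_pow_mem
    (fun y hy => pow_exponent_quotient_subgroupOf_mem (H := H) ⟨y, hy⟩) x.2
  rwa [hH, mem_bot] at hcore

end Subgroup

theorem exponent_sylow_eq_exponent_quotient_general {G : Type*} [Group G]
    (p : ℕ)
    (S : Sylow p G) (hS : (S : Subgroup G).Normal)
    [hcomm : IsMulCommutative ↥(S : Subgroup G)]
    (H : Subgroup G) (hH : H.normalCore = ⊥) :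
    Monoid.exponent ↥(S : Subgroup G) =
      Monoid.exponent (↥(S : Subgroup G) ⧸ H.subgroupOf (S : Subgroup G)) :=
  have := hS
  (Subgroup.exponent_quotient_subgroupOf_eq_of_normalCore_eq_bot hH).symm

/-- Lemma 4.3(iv)(b): if the `p`-Sylow subgroup `S_p` of `G` is normal and abelian,
and `H ≤ G` has trivial normal core in `G`, then the exponent of `S_p` equals the
exponent of `S_p / (S_p ∩ H)`. -/
theorem exponent_sylow_eq_exponent_quotient {G : Type*} [Group G] [Finite G]
    (p : ℕ) [Fact p.Prime] (hdvd : p ∣ Nat.card G)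
    (S : Sylow p G) (hS : (S : Subgroup G).Normal)
    [hcomm : IsMulCommutative ↥(S : Subgroup G)]
    (H : Subgroup G) (hH : H.normalCore = ⊥) :
    Monoid.exponent ↥(S : Subgroup G) =
      Monoid.exponent (↥(S : Subgroup G) ⧸ H.subgroupOf (S : Subgroup G)) :=
  exponent_sylow_eq_exponent_quotient_general p S hS (hcomm := hcomm) H hH
end

section
/- Let G be a finite group with normal p-Sylow subgroup S_p, and H a subgroup of G with trivial normal core such that ord_p(G:H) = 1. Then S_p is abelian; in fact S_p is isomorphic to (ℤ/p)^m for some m ≥ 1. -/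
/-!
Put `K = S_p` and `T = H ∩ K`. Since `K` is normal, `(G : H)` and `(K : T)` differ by factors
prime to `p`, so `(K : T) = p`. An index-`p` subgroup of a `p`-group is normal with cyclic
quotient, so `T` contains all `p`-th powers and commutators of `K`. These sets are stable under
conjugation by `G`, hence lie in the normal core of `H`, which is trivial: `K` is abelian of
exponent `p`, i.e. an `𝔽_p`-vector space.
-/

open scoped IsMulCommutative

namespace Subgroup

variable {G : Type*} [Group G]

theorem factorization_relIndex_eq_of_not_dvd_index {H K : Subgroup G} [K.Normal]
    [H.FiniteIndex] [K.FiniteIndex] {p : ℕ} (hpK : ¬ p ∣ K.index) :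
    (H.relIndex K).factorization p = H.index.factorization p := by
  have : H.IsFiniteRelIndex K := isFiniteRelIndex_of_finiteIndex
  have : K.IsFiniteRelIndex H := isFiniteRelIndex_of_finiteIndex
  have hpKH : ¬ p ∣ K.relIndex H := fun h => hpK (h.trans (relIndex_dvd_index_of_normal K H))
  have hindex_inf : H.relIndex K * K.index = K.relIndex H * H.index := by
    rw [← inf_relIndex_right, relIndex_mul_index inf_le_right, ← inf_relIndex_left,
      relIndex_mul_index inf_le_left]
  have := congrArg (fun n => n.factorization p) hindex_inf
  rwa [Nat.factorization_mul relIndex_ne_zero index_ne_zero_of_finite,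
    Nat.factorization_mul relIndex_ne_zero index_ne_zero_of_finite, Finsupp.add_apply,
    Finsupp.add_apply, Nat.factorization_eq_zero_of_not_dvd hpK,
    Nat.factorization_eq_zero_of_not_dvd hpKH, add_zero, zero_add] at this

theorem pow_mem_normalCore {H K : Subgroup G} [hK : K.Normal] {n : ℕ}
    (h : ∀ x ∈ K, x ^ n ∈ H) {x : G} (hx : x ∈ K) : x ^ n ∈ H.normalCore := fun g => by
  rw [← conj_pow]
  exact h _ (hK.conj_mem x hx g)

end Subgroup

namespace IsPGroup

variable {P : Type*} [Group P] {p : ℕ} [hp : Fact p.Prime]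

theorem normal_of_index_eq [Finite P] (hP : IsPGroup p P) {T : Subgroup P} (hT : T.index = p) :
    T.Normal := by
  apply Subgroup.normal_of_index_eq_minFac_card
  obtain ⟨n, hn⟩ := hP.exists_card_eq
  have hn0 : n ≠ 0 := by
    rintro rfl
    have := hT ▸ T.index_dvd_card
    rw [hn, pow_zero, Nat.dvd_one] at this
    exact hp.out.one_lt.ne' this
  rw [hT, hn, hp.out.pow_minFac hn0]

theorem pow_mem_of_index_eq [Finite P] (hP : IsPGroup p P) {T : Subgroup P} (hT : T.index = p)
    (x : P) : x ^ p ∈ T :=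
  have := hP.normal_of_index_eq hT
  hT ▸ T.pow_index_mem x

theorem commutator_le_of_index_eq [Finite P] (hP : IsPGroup p P) {T : Subgroup P}
    (hT : T.index = p) : commutator P ≤ T :=
  have := hP.normal_of_index_eq hT
  have : IsCyclic (P ⧸ T) := isCyclic_of_prime_card (T.index_eq_card ▸ hT)
  Subgroup.Normal.quotient_commutative_iff_commutator_le.mp inferInstance

theorem index_eq_of_factorization_index_eq_one (hP : IsPGroup p P) {T : Subgroup P}
    [T.FiniteIndex] (hT : T.index.factorization p = 1) : T.index = p := by
  obtain ⟨n, hn⟩ := hP.index T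
  rw [hn, hp.out.factorization_pow, Finsupp.single_eq_same] at hT
  rw [hn, hT, pow_one]

end IsPGroup

theorem Module.exists_linearEquiv_fin_pi_of_finite {K V : Type*} [DivisionRing K]
    [AddCommGroup V] [Module K V] [Finite V] [Nontrivial V] :
    ∃ m : ℕ, 0 < m ∧ Nonempty (V ≃ₗ[K] (Fin m → K)) :=
  ⟨_, Module.finrank_pos, ⟨(Module.finBasis K V).equivFun⟩⟩

theorem exists_mulEquiv_fin_zmod_of_pow_eq_one {A : Type*} [CommGroup A] [Finite A] [Nontrivial A]
    {p : ℕ} [Fact p.Prime] (h : ∀ a : A, a ^ p = 1) :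
    ∃ m : ℕ, 0 < m ∧ Nonempty (A ≃* Multiplicative (Fin m → ZMod p)) := by
  let _ : Module (ZMod p) (Additive A) := AddCommGroup.zmodModule fun a => h a.toMul
  obtain ⟨m, hm, ⟨e⟩⟩ :=
    Module.exists_linearEquiv_fin_pi_of_finite (K := ZMod p) (V := Additive A)
  exact ⟨m, hm, ⟨AddEquiv.toMultiplicativeRight e.toAddEquiv⟩⟩

open Subgroup in
theorem sylow_elementary_abelian_of_core_trivial_general {G : Type*} [Group G] [Finite G]
    (p : ℕ) [Fact p.Prime]
    (S : Sylow p G) (hS : (S : Subgroup G).Normal)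
    (H : Subgroup G) (hH : H.normalCore = ⊥)
    (hval : H.index.factorization p = 1) :
    IsMulCommutative ↥(S : Subgroup G) ∧
      ∃ m : ℕ, 0 < m ∧
        Nonempty (↥(S : Subgroup G) ≃* Multiplicative (Fin m → ZMod p)) := by
  set K : Subgroup G := (S : Subgroup G)
  have hrel : H.relIndex K = p := S.isPGroup'.index_eq_of_factorization_index_eq_one <|
    (factorization_relIndex_eq_of_not_dvd_index S.not_dvd_index).trans hval
  have hpow (x : G) (hx : x ∈ K) : x ^ p ∈ H := S.isPGroup'.pow_mem_of_index_eq hrel ⟨x, hx⟩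
  have hcomm : ⁅K, K⁆ ≤ H := commutator_le.mpr fun x hx y hy =>
    S.isPGroup'.commutator_le_of_index_eq hrel (commutator_mem_commutator (g₁ := ⟨x, hx⟩)
      (g₂ := ⟨y, hy⟩) (mem_top _) (mem_top _))
  have hab : IsMulCommutative K :=
    commutator_self_eq_bot_iff.mp (le_bot_iff.mp (hH ▸ normal_le_normalCore.mpr hcomm))
  have : Nontrivial K := (nontrivial_iff_ne_bot K).mpr fun hbot =>
    (Fact.out : p.Prime).one_lt.ne' (hrel ▸ relIndex_eq_one.mpr (hbot ▸ bot_le))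
  refine ⟨hab, exists_mulEquiv_fin_zmod_of_pow_eq_one fun x => Subtype.ext ?_⟩
  simpa [← mem_bot, ← hH] using pow_mem_normalCore hpow x.2

/-- Lemma 4.3(v): if the `p`-Sylow subgroup `S_p` of `G` is normal, `H` has trivial
normal core and `ord_p (G : H) = 1`, then `S_p` is abelian; in fact
`S_p ≅ (ℤ/p)^m` for some `m ≥ 1`. -/
theorem sylow_elementary_abelian_of_core_trivial {G : Type*} [Group G] [Finite G]
    (p : ℕ) [Fact p.Prime] (hdvd : p ∣ Nat.card G)
    (S : Sylow p G) (hS : (S : Subgroup G).Normal)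
    (H : Subgroup G) (hH : H.normalCore = ⊥)
    (hval : H.index.factorization p = 1) :
    IsMulCommutative ↥(S : Subgroup G) ∧
      ∃ m : ℕ, 0 < m ∧
        Nonempty (↥(S : Subgroup G) ≃* Multiplicative (Fin m → ZMod p)) :=
  sylow_elementary_abelian_of_core_trivial_general p S hS H hH hval
end

section
/- Let G be a finite group, p a prime divisor of #G, S_p a p-Sylow subgroup of G, and H a subgroup of G with ord_p(G:H) = 1. If (G:H) ≤ p(p−1), then the number of double cosets #(S_p\G/H) equals (G:H)/p and S_p ∩ gHg⁻¹ is a subgroup of S_p of index p for every g ∈ G. -/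
/-!
Let `S` act on `G ⧸ H` by left multiplication. The double cosets `S g H` are the orbits, and
the stabilizer of `gH` is `S ∩ gHg⁻¹`, so each orbit has size `|S : S ∩ gHg⁻¹|`. This index is a
power of `p` bounded by `(G : H) < p²`, and it is not `1`: otherwise `S ≤ gHg⁻¹` and the index
`(G : H)`, which `p` divides, would divide the `p'`-number `(G : S)`. Hence every orbit has
exactly `p` points and there are `(G : H) / p` of them.
-/

open MulAction Subgroup

theorem MulAction.card_eq_card_orbitRel_quotient_mul {α β : Type*} [Group α] [MulAction α β]
    [Finite β] {n : ℕ} (h : ∀ x : β, (stabilizer α x).index = n) :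
    Nat.card β = Nat.card (orbitRel.Quotient α β) * n := by
  have := Fintype.ofFinite (orbitRel.Quotient α β)
  have (ω : orbitRel.Quotient α β) : Finite (α ⧸ stabilizer α ω.out) :=
    .of_equiv _ (orbitEquivQuotientStabilizer α _)
  rw [Nat.card_congr (selfEquivSigmaOrbitsQuotientStabilizer α β), Nat.card_sigma]
  simp [← index_eq_card, h, Nat.card_eq_fintype_card]

section CosetAction

variable {G : Type*} [Group G] (K H : Subgroup G)

theorem Subgroup.smul_mk_eq_mk_mul (s : K) (g : G) :
    s • (g : G ⧸ H) = ((s * g : G) : G ⧸ H) :=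
  rfl

theorem Subgroup.stabilizer_mk_eq_map_conj_subgroupOf (g : G) :
    stabilizer K (g : G ⧸ H) = (H.map (MulAut.conj g).toMonoidHom).subgroupOf K := by
  ext s
  rw [mem_stabilizer_iff, mem_subgroupOf, smul_mk_eq_mk_mul, QuotientGroup.eq,
    mem_map_equiv, MulAut.conj_symm_apply,
    show ((s : G) * g)⁻¹ * g = (g⁻¹ * (s : G) * g)⁻¹ by group, inv_mem_iff]

theorem DoubleCoset.setoid_eq_ker_mk_orbitRel :
    DoubleCoset.setoid (K : Set G) H =
      Setoid.ker fun g : G ↦ (Quotient.mk'' (g : G ⧸ H) : orbitRel.Quotient K (G ⧸ H)) := by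
  ext a b
  rw [DoubleCoset.rel_iff, Setoid.ker_def, eq_comm, Quotient.eq'', orbitRel_apply, mem_orbit_iff]
  constructor
  · rintro ⟨s, hs, h, hh, rfl⟩
    exact ⟨⟨s, hs⟩, QuotientGroup.eq.mpr (by simpa [mul_assoc] using hh)⟩
  · rintro ⟨s, hs⟩
    exact ⟨s, s.2, (s * a)⁻¹ * b, QuotientGroup.eq.mp hs, by group⟩

noncomputable def DoubleCoset.quotientEquivOrbitRelQuotient :
    DoubleCoset.Quotient (K : Set G) H ≃ orbitRel.Quotient K (G ⧸ H) :=
  (Quotient.congrRight fun a b ↦ by rw [setoid_eq_ker_mk_orbitRel]).trans <|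
    Setoid.quotientKerEquivOfSurjective _ <|
      Quotient.mk''_surjective.comp QuotientGroup.mk_surjective

end CosetAction

theorem Sylow.relIndex_eq_prime_of_dvd_index_of_index_lt_sq {G : Type*} [Group G] [Finite G]
    {p : ℕ} [Fact p.Prime] (S : Sylow p G) {K : Subgroup G} (hdvd : p ∣ K.index)
    (hlt : K.index < p ^ 2) :
    K.relIndex S = p := by
  obtain ⟨n, hn⟩ := S.isPGroup'.index (K.subgroupOf S)
  rw [Subgroup.relIndex, hn]
  have hle : p ^ n ≤ K.index :=
    calc p ^ n = K.relIndex S := hn.symm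
      _ ≤ K.relIndex ⊤ := relIndex_le_of_le_right le_top (by simp [K.index_ne_zero_of_finite])
      _ = K.index := relIndex_top_right K
  have hn0 : n ≠ 0 := by
    rintro rfl
    have hSK : (S : Subgroup G) ≤ K := relIndex_eq_one.mp (by simpa [Subgroup.relIndex] using hn)
    exact S.not_dvd_index (hdvd.trans (index_dvd_of_le hSK))
  have hn2 : n < 2 := (Nat.pow_lt_pow_iff_right (Fact.out : p.Prime).one_lt).mp (hle.trans_lt hlt)
  obtain rfl : n = 1 := by omega
  exact pow_one p

theorem card_doset_quotient_and_relindex_general {G : Type*} [Group G] [Finite G]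
    (p : ℕ) [Fact p.Prime]
    (S : Sylow p G) (H : Subgroup G)
    (hval : H.index.factorization p = 1)
    (hle : H.index ≤ p * (p - 1)) :
    Nat.card (DoubleCoset.Quotient ((S : Subgroup G) : Set G) (H : Set G)) = H.index / p ∧
      ∀ g : G,
        (Subgroup.map (MulAut.conj g).toMonoidHom H).relIndex (S : Subgroup G) = p := by
  have hp : p.Prime := Fact.out
  have hdvd : p ∣ H.index := Nat.dvd_of_factorization_pos (by rw [hval]; exact one_ne_zero)
  have hlt : H.index < p ^ 2 :=
    hle.trans_lt (sq p ▸ Nat.mul_lt_mul_of_pos_left (Nat.sub_lt hp.pos one_pos) hp.pos)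
  have hrelIndex (g : G) : (H.map (MulAut.conj g).toMonoidHom).relIndex S = p := by
    apply S.relIndex_eq_prime_of_dvd_index_of_index_lt_sq <;>
      rwa [index_map_of_bijective (MulAut.conj g).bijective]
  refine ⟨?_, hrelIndex⟩
  have hcard : Nat.card (G ⧸ H) = Nat.card (orbitRel.Quotient S (G ⧸ H)) * p := by
    refine card_eq_card_orbitRel_quotient_mul fun x ↦ ?_
    obtain ⟨g, rfl⟩ := QuotientGroup.mk_surjective x
    rw [stabilizer_mk_eq_map_conj_subgroupOf]
    exact hrelIndex g
  rw [Nat.card_congr (DoubleCoset.quotientEquivOrbitRelQuotient _ _), index_eq_card, hcard,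
    Nat.mul_div_cancel _ hp.pos]

/-- Lemma 4.17: if `ord_p (G : H) = 1` and `(G : H) ≤ p (p - 1)`, then the number
of double cosets `S_p \ G / H` equals `(G : H) / p`, and `S_p ∩ gHg⁻¹` has index
`p` in `S_p` for every `g ∈ G`. -/
theorem card_doset_quotient_and_relindex {G : Type*} [Group G] [Finite G]
    (p : ℕ) [Fact p.Prime] (hdvd : p ∣ Nat.card G)
    (S : Sylow p G) (H : Subgroup G)
    (hval : H.index.factorization p = 1)
    (hle : H.index ≤ p * (p - 1)) :
    Nat.card (DoubleCoset.Quotient ((S : Subgroup G) : Set G) (H : Set G)) = H.index / p ∧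
      ∀ g : G,
        (Subgroup.map (MulAut.conj g).toMonoidHom H).relIndex (S : Subgroup G) = p :=
  card_doset_quotient_and_relindex_general p S H hval hle
end

section
/- Let G be a finite group with normal abelian p-Sylow subgroup S_p of exponent p, write G = S_p ⋊ G' with p ∤ #G', and let H be a subgroup of G of the form (S_p ∩ H) ⋊ H' with H' ≤ G'. If the commutator subgroup [S_p, H] contains S_p ∩ H and S_p ∩ H is nontrivial, then the normalizer N_G(S_p ∩ H) strictly contains the centralizer Z_G(S_p ∩ H). -/
/-!
Suppose the centralizer and the normalizer of `K = S ⊓ H` agree. Since `S` is normal, `H`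
normalizes `K`, hence centralizes it. On the abelian group `S` the norm
`N x = ∏_{q ∈ H'} q x q⁻¹` kills every commutator `⁅s, a q⁆ = s · (q s⁻¹ q⁻¹)` with
`s, a ∈ S`, `q ∈ H'`, so it kills `⁅S, H⁆ ⊇ K`; on `K` it is `x ↦ x ^ |H'|`. As `|H'|` is prime
to `p` and `K` is a `p`-group, `K` is trivial.
-/

open scoped IsMulCommutative commutatorElement

theorem IsPGroup.eq_one_of_pow_eq_one {G : Type*} [Group G] {p n : ℕ} (hG : IsPGroup p G)
    (hn : p.Coprime n) {g : G} (hg : g ^ n = 1) : g = 1 :=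
  orderOf_eq_one_iff.mp ((hG.orderOf_coprime hn g).eq_one_of_dvd (orderOf_dvd_of_pow_eq_one hg))

namespace Subgroup

variable {G : Type*} [Group G] (A : Subgroup G) [A.Normal] [IsMulCommutative A]

theorem commutatorElement_mul_eq_of_mem {s a : G} (hs : s ∈ A) (ha : a ∈ A) (q : G) :
    ⁅s, a * q⁆ = s * (q * s⁻¹ * q⁻¹) := by
  have hcomm := setLike_mul_comm ha (Normal.conj_mem ‹_› _ (inv_mem hs) q)
  calc ⁅s, a * q⁆ = s * (a * (q * s⁻¹ * q⁻¹)) * a⁻¹ := by group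
    _ = s * (q * s⁻¹ * q⁻¹) := by rw [hcomm]; group

variable (Q : Subgroup G) [Fintype Q]

noncomputable def conjNorm : A →* A :=
  ∏ q : Q, (MulAut.conjNormal (q : G)).toMonoidHom

theorem conjNorm_apply (x : A) : conjNorm A Q x = ∏ q : Q, MulAut.conjNormal (q : G) x := by
  simp [conjNorm, MonoidHom.finsetProd_apply]

variable {A Q}

theorem conjNorm_conjNormal {q : G} (hq : q ∈ Q) (x : A) :
    conjNorm A Q (MulAut.conjNormal q x) = conjNorm A Q x := by
  rw [conjNorm_apply, conjNorm_apply]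
  exact Fintype.prod_equiv (Equiv.mulRight ⟨q, hq⟩) _ _ fun r => by
    rw [Equiv.coe_mulRight, coe_mul, map_mul, MulAut.mul_apply]

theorem conjNorm_eq_pow_card (x : A) (hx : ∀ q ∈ Q, Commute q (x : G)) :
    conjNorm A Q x = x ^ Nat.card Q := by
  rw [conjNorm_apply, Nat.card_eq_fintype_card, ← Finset.card_univ, ← Finset.prod_const]
  refine Finset.prod_congr rfl fun q _ => Subtype.ext ?_
  simp [(hx q q.2).eq]

theorem commutator_sup_le_map_ker_conjNorm :
    ⁅A, A ⊔ Q⁆ ≤ (conjNorm A Q).ker.map A.subtype := by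
  rw [commutator_le]
  intro s hs h hh
  obtain ⟨a, ha, q, hq, rfl⟩ := mem_sup_of_normal_left.mp hh
  refine ⟨⟨s, hs⟩ * MulAut.conjNormal q ⟨s, hs⟩⁻¹, ?_, ?_⟩
  · rw [SetLike.mem_coe, MonoidHom.mem_ker, map_mul, conjNorm_conjNormal hq, ← map_mul,
      mul_inv_cancel, map_one]
  · simp [commutatorElement_mul_eq_of_mem A hs ha q, mul_assoc]

theorem pow_card_eq_one_of_mem_commutator {x : G} (hx : x ∈ ⁅A, A ⊔ Q⁆)
    (hQx : ∀ q ∈ Q, Commute q x) : x ^ Nat.card Q = 1 := by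
  obtain ⟨y, hy, rfl⟩ := commutator_sup_le_map_ker_conjNorm hx
  rw [coe_subtype, ← coe_pow, ← conjNorm_eq_pow_card y hQx, hy, coe_one]

end Subgroup

open Subgroup in
theorem centralizer_lt_normalizer_of_inf_le_commutator_general {G : Type*} [Group G] [Finite G]
    (p : ℕ) [Fact p.Prime]
    (S : Sylow p G) (hS : (S : Subgroup G).Normal)
    (hcomm : IsMulCommutative (S : Subgroup G))
    (G' : Subgroup G)
    (hp' : ¬ p ∣ Nat.card G')
    (H H' : Subgroup G) (hH'G' : H' ≤ G')
    ( hH : H = ((S : Subgroup G) ⊓ H) ⊔ H')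
    (hsub : (S : Subgroup G) ⊓ H ≤ ⁅(S : Subgroup G), H⁆)
    (hnontriv : (S : Subgroup G) ⊓ H ≠ ⊥) :
    Subgroup.centralizer (((S : Subgroup G) ⊓ H : Subgroup G) : Set G) <
      Subgroup.normalizer (((S : Subgroup G) ⊓ H : Subgroup G) : Set G) := by
  refine (centralizer_le_normalizer _).lt_of_ne fun heq => hnontriv ?_
  have : Fintype H' := Fintype.ofFinite H'
  have hHcent : H ≤ centralizer ((S ⊓ H : Subgroup G) : Set G) :=
    heq ▸ (le_inf le_normalizer_of_normal le_normalizer).trans inf_normalizer_le_normalizer_inf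
  have hHS : H ≤ (S : Subgroup G) ⊔ H' := hH ▸ sup_le_sup_right inf_le_left H'
  have hcop : p.Coprime (Nat.card H') := (Nat.Prime.coprime_iff_not_dvd Fact.out).mpr
    fun hdvd => hp' (hdvd.trans (card_dvd_of_le hH'G'))
  refine (eq_bot_iff_forall _).mpr fun k hk => ?_
  have hpow : k ^ Nat.card H' = 1 :=
    pow_card_eq_one_of_mem_commutator (commutator_mono le_rfl hHS (hsub hk))
      fun q hq => ((mem_centralizer_iff.mp (hHcent (hH ▸ mem_sup_right hq))) k hk).symm
  exact congrArg Subtype.val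
    (S.isPGroup'.eq_one_of_pow_eq_one hcop (g := ⟨k, hk.1⟩) (Subtype.ext hpow))

/-- Lemma 4.15: `G = S_p ⋊ G'` with `S_p` a normal abelian `p`-Sylow subgroup of
exponent `p` and `p ∤ #G'`, and `H = (S_p ⊓ H) ⊔ H'` with `H' ≤ G'`. If
`S_p ⊓ H ≤ ⁅S_p, H⁆` and `S_p ⊓ H` is nontrivial, then the normalizer of
`S_p ⊓ H` strictly contains its centralizer. -/
theorem centralizer_lt_normalizer_of_inf_le_commutator {G : Type*} [Group G] [Finite G]
    (p : ℕ) [Fact p.Prime]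
    (S : Sylow p G) (hS : (S : Subgroup G).Normal)
    (hcomm : IsMulCommutative (S : Subgroup G))
    (hexp : ∀ s ∈ (S : Subgroup G), s ^ p = 1)
    (G' : Subgroup G) (hcompl : Subgroup.IsComplement' (S : Subgroup G) G')
    (hp' : ¬ p ∣ Nat.card G')
    (H H' : Subgroup G) (hH'G' : H' ≤ G')
    ( hH : H = ((S : Subgroup G) ⊓ H) ⊔ H')
    (hsub : (S : Subgroup G) ⊓ H ≤ ⁅(S : Subgroup G), H⁆)
    (hnontriv : (S : Subgroup G) ⊓ H ≠ ⊥) :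
    Subgroup.centralizer (((S : Subgroup G) ⊓ H : Subgroup G) : Set G) <
      Subgroup.normalizer (((S : Subgroup G) ⊓ H : Subgroup G) : Set G) :=
  centralizer_lt_normalizer_of_inf_le_commutator_general p S hS hcomm G' hp' H H' hH'G' hH hsub
    hnontriv
end

section
/- Let p be an odd prime, G' a subgroup of GL₂(𝔽_p), and H' a subgroup of G' contained in M(𝔽_p) := {diag(1,b) : b ∈ 𝔽_p^×}. If the normal core N^{G'}(H') = ⋂_{g∈G'} gH'g⁻¹ is nontrivial and contained in M(𝔽_p), then G' is contained in the diagonal torus T(𝔽_p) := {diag(a,b) : a,b ∈ 𝔽_p^×}. -/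
/-!
Take a nontrivial `x` in the core; it is `diag(1, b)` with `b ≠ 1`. For `g ∈ G'` the conjugate
`g⁻¹ x g` lies in `H'`, so it is some `diag(1, c)`, i.e. `diag(1, b) g = g diag(1, c)`. Comparing
entries, `g i j ≠ 0` forces the `i`-th entry of `(1, b)` to equal the `j`-th entry of `(1, c)`.
Hence `g 1 0 = 0`; invertibility then gives `g 1 1 ≠ 0`, so `c = b ≠ 1` and `g 0 1 = 0`.
-/

namespace Matrix

theorem apply_eq_zero_of_diagonal_mul_eq_mul_diagonal {m n R : Type*} [Fintype m] [Fintype n]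
    [DecidableEq m] [DecidableEq n] [CommRing R] [NoZeroDivisors R] {d : m → R} {e : n → R}
    {A : Matrix m n R} (h : diagonal d * A = A * diagonal e) {i : m} {j : n} (hij : d i ≠ e j) :
    A i j = 0 := by
  have hentry : (d i - e j) * A i j = 0 := by
    have := congr_fun₂ h i j
    rw [diagonal_mul, mul_diagonal] at this
    linear_combination this
  exact (mul_eq_zero.mp hentry).resolve_left (sub_ne_zero.mpr hij)

theorem offDiag_eq_zero_of_diagonal_mul_eq_mul_diagonal {R : Type*} [CommRing R] [IsDomain R]
    {A : Matrix (Fin 2) (Fin 2) R} (hA : IsUnit A.det) {b c : R} (hb : b ≠ 1)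
    (h : diagonal ![1, b] * A = A * diagonal ![1, c]) : A 0 1 = 0 ∧ A 1 0 = 0 := by
  have h10 : A 1 0 = 0 := apply_eq_zero_of_diagonal_mul_eq_mul_diagonal h (i := 1) (j := 0) hb
  have h11 : A 1 1 ≠ 0 := by
    intro h11
    apply hA.ne_zero
    rw [det_fin_two, h10, h11, mul_zero, mul_zero, sub_zero]
  have hcb : c = b := by
    by_contra hcb
    exact h11 (apply_eq_zero_of_diagonal_mul_eq_mul_diagonal h (i := 1) (j := 1) (Ne.symm hcb))
  refine ⟨apply_eq_zero_of_diagonal_mul_eq_mul_diagonal h (i := 0) (j := 1) ?_, h10⟩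
  simpa [hcb] using hb.symm

end Matrix

theorem subset_diagonal_of_core_nontrivial_general {p : ℕ} [Fact p.Prime]
    (G' H' : Subgroup (GL (Fin 2) (ZMod p)))
    (hHM : ∀ x ∈ H', ∃ b : (ZMod p)ˣ,
      (x : Matrix (Fin 2) (Fin 2) (ZMod p)) = !![1, 0; 0, (b : ZMod p)])
    (hcore_ne : ∃ x : GL (Fin 2) (ZMod p), x ≠ 1 ∧ ∀ g ∈ G', g⁻¹ * x * g ∈ H')
    (hcoreM : ∀ x : GL (Fin 2) (ZMod p), (∀ g ∈ G', g⁻¹ * x * g ∈ H') →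
      ∃ b : (ZMod p)ˣ,
        (x : Matrix (Fin 2) (Fin 2) (ZMod p)) = !![1, 0; 0, (b : ZMod p)]) :
    ∀ g ∈ G', (g : Matrix (Fin 2) (Fin 2) (ZMod p)) 0 1 = 0 ∧
      (g : Matrix (Fin 2) (Fin 2) (ZMod p)) 1 0 = 0 := by
  intro g hg
  obtain ⟨x, hx_ne, hx_core⟩ := hcore_ne
  obtain ⟨b, hx⟩ := hcoreM x hx_core
  obtain ⟨c, hconj⟩ := hHM _ (hx_core g hg)
  have hb : (b : ZMod p) ≠ 1 := by
    rintro hb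
    exact hx_ne (Units.ext (by rw [hx, hb, Units.val_one, Matrix.one_fin_two]))
  have hcomm : (x : Matrix (Fin 2) (Fin 2) (ZMod p)) * g =
      g * ((g⁻¹ * x * g : GL (Fin 2) (ZMod p)) : Matrix (Fin 2) (Fin 2) (ZMod p)) := by
    rw [← Units.val_mul, ← Units.val_mul, mul_assoc, mul_inv_cancel_left]
  rw [hx, hconj, ← Matrix.diagonal_vec2, ← Matrix.diagonal_vec2] at hcomm
  exact Matrix.offDiag_eq_zero_of_diagonal_mul_eq_mul_diagonal
    ((Matrix.isUnit_iff_isUnit_det _).mp g.isUnit) hb hcomm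

/-- Lemma 5.11(i): for `p` an odd prime, if `H' ≤ G' ≤ GL₂(𝔽_p)` with `H'` contained
in `M(𝔽_p) = {diag(1,b)}`, and the normal core `⋂_{g ∈ G'} gH'g⁻¹` of `H'` in `G'`
is nontrivial and contained in `M(𝔽_p)`, then `G'` is contained in the diagonal
torus `T(𝔽_p)`. -/
theorem subset_diagonal_of_core_nontrivial {p : ℕ} [Fact p.Prime] (hp : p ≠ 2)
    (G' H' : Subgroup (GL (Fin 2) (ZMod p))) (hle : H' ≤ G')
    (hHM : ∀ x ∈ H', ∃ b : (ZMod p)ˣ,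
      (x : Matrix (Fin 2) (Fin 2) (ZMod p)) = !![1, 0; 0, (b : ZMod p)])
    (hcore_ne : ∃ x : GL (Fin 2) (ZMod p), x ≠ 1 ∧ ∀ g ∈ G', g⁻¹ * x * g ∈ H')
    (hcoreM : ∀ x : GL (Fin 2) (ZMod p), (∀ g ∈ G', g⁻¹ * x * g ∈ H') →
      ∃ b : (ZMod p)ˣ,
        (x : Matrix (Fin 2) (Fin 2) (ZMod p)) = !![1, 0; 0, (b : ZMod p)]) :
    ∀ g ∈ G', (g : Matrix (Fin 2) (Fin 2) (ZMod p)) 0 1 = 0 ∧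
      (g : Matrix (Fin 2) (Fin 2) (ZMod p)) 1 0 = 0 :=
  subset_diagonal_of_core_nontrivial_general G' H' hHM hcore_ne hcoreM
end

section
/- Let p be an odd prime, G' a subgroup of GL₂(𝔽_p), and H' a subgroup of G' of index 2 contained in M(𝔽_p) := {diag(1,b) : b ∈ 𝔽_p^×}. Then either G' is contained in the diagonal torus T(𝔽_p), or #G' = 2 and the fixed subspace (𝔽_p^2)^{H'} is nonzero. -/
/-!
Index two makes `H'` normal in `G'`. Conjugation preserves the determinant, which
determines an element `diag(1, b)` of `M`, so every `g ∈ G'` centralizes `H'`. A matrix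
commuting with `diag(1, b)` for `b ≠ 1` is diagonal; hence if some `g ∈ G'` is not diagonal,
`H'` is trivial and `#G' = [G' : H'] = 2`.
-/

open Matrix

theorem Matrix.offDiag_eq_zero_of_commute_diag_one {R : Type*} [CommRing R] [NoZeroDivisors R]
    {A : Matrix (Fin 2) (Fin 2) R} {b : R} (hb : b ≠ 1) (h : Commute A !![1, 0; 0, b]) :
    A 0 1 = 0 ∧ A 1 0 = 0 := by
  have h01 := congrFun (congrFun h.eq 0) 1
  have h10 := congrFun (congrFun h.eq 1) 0
  simp only [mul_apply, Fin.sum_univ_two, of_apply, cons_val', cons_val_zero, cons_val_one,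
    empty_val', cons_val_fin_one, mul_zero, mul_one, zero_mul, one_mul, add_zero,
    zero_add] at h01 h10
  have hb' : b - 1 ≠ 0 := sub_ne_zero.mpr hb
  constructor
  · exact (mul_eq_zero.mp (by linear_combination h01 : A 0 1 * (b - 1) = 0)).resolve_right hb'
  · exact (mul_eq_zero.mp (by linear_combination -h10 : A 1 0 * (b - 1) = 0)).resolve_right hb'

theorem Matrix.GeneralLinearGroup.conj_eq_self_of_diag_one {R : Type*} [CommRing R]
    {g x : GL (Fin 2) R} {b b' : R} (hx : (x : Matrix (Fin 2) (Fin 2) R) = !![1, 0; 0, b])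
    (hconj : ((g * x * g⁻¹ : GL (Fin 2) R) : Matrix (Fin 2) (Fin 2) R) = !![1, 0; 0, b']) :
    g * x * g⁻¹ = x := by
  have hdet : b' = b := by
    have := det_units_conj g (x : Matrix (Fin 2) (Fin 2) R)
    rw [← Units.val_mul, ← Units.val_mul] at this
    simpa [hx, hconj, det_fin_two_of] using this
  ext1
  rw [hconj, hx, hdet]

theorem Subgroup.mul_mul_inv_mem_of_relIndex_eq_two {G : Type*} [Group G] {H K : Subgroup G}
    (hidx : H.relIndex K = 2) {g x : G} (hg : g ∈ K) (hxK : x ∈ K) (hx : x ∈ H) :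
    g * x * g⁻¹ ∈ H :=
  (normal_of_index_eq_two hidx).conj_mem ⟨x, hxK⟩ hx ⟨g, hg⟩

theorem Matrix.GeneralLinearGroup.eq_one_of_conj_diag_one {R : Type*} [CommRing R]
    [NoZeroDivisors R] {g x : GL (Fin 2) R}
    (hg : ¬((g : Matrix (Fin 2) (Fin 2) R) 0 1 = 0 ∧ (g : Matrix (Fin 2) (Fin 2) R) 1 0 = 0))
    {b b' : R} (hx : (x : Matrix (Fin 2) (Fin 2) R) = !![1, 0; 0, b])
    (hconj : ((g * x * g⁻¹ : GL (Fin 2) R) : Matrix (Fin 2) (Fin 2) R) = !![1, 0; 0, b']) :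
    x = 1 := by
  have hcomm : Commute g x := mul_inv_eq_iff_eq_mul.mp (conj_eq_self_of_diag_one hx hconj)
  by_cases hb : b = 1
  · ext1
    rw [hx, hb, Units.val_one, one_fin_two]
  · exact absurd (offDiag_eq_zero_of_commute_diag_one hb (hx ▸ hcomm.units_val)) hg

theorem subset_diagonal_or_card_two_of_index_two_general {p : ℕ} [Fact p.Prime]
    (G' H' : Subgroup (GL (Fin 2) (ZMod p))) (hle : H' ≤ G')
    (hidx : H'.relIndex G' = 2)
    (hHM : ∀ x ∈ H', ∃ b : (ZMod p)ˣ,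
      (x : Matrix (Fin 2) (Fin 2) (ZMod p)) = !![1, 0; 0, (b : ZMod p)]) :
    (∀ g ∈ G', (g : Matrix (Fin 2) (Fin 2) (ZMod p)) 0 1 = 0 ∧
        (g : Matrix (Fin 2) (Fin 2) (ZMod p)) 1 0 = 0) ∨
      (Nat.card G' = 2 ∧ ∃ v : Fin 2 → ZMod p, v ≠ 0 ∧
        ∀ x ∈ H', Matrix.mulVec (x : Matrix (Fin 2) (Fin 2) (ZMod p)) v = v) := by
  refine or_iff_not_imp_left.mpr fun hdiag => ?_
  obtain ⟨g, hgG, hg⟩ := not_forall₂.mp hdiag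
  have hbot : H' = ⊥ := by
    refine (Subgroup.eq_bot_iff_forall H').mpr fun x hx => ?_
    obtain ⟨b, hb⟩ := hHM x hx
    obtain ⟨b', hb'⟩ := hHM _ (Subgroup.mul_mul_inv_mem_of_relIndex_eq_two hidx hgG (hle hx) hx)
    exact GeneralLinearGroup.eq_one_of_conj_diag_one hg hb hb'
  rw [hbot, Subgroup.relIndex_bot_left] at hidx
  refine ⟨hidx, fun _ => 1, fun h => one_ne_zero (congrFun h 0), fun x hx => ?_⟩
  rw [hbot, Subgroup.mem_bot] at hx
  rw [hx, Units.val_one, one_mulVec]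

/-- Lemma 5.11(ii): for `p` an odd prime, if `H' ≤ G' ≤ GL₂(𝔽_p)` has index 2 in `G'`
and is contained in `M(𝔽_p) = {diag(1,b)}`, then either `G'` is contained in the
diagonal torus `T(𝔽_p)` or `#G' = 2` and the `H'`-fixed subspace of `𝔽_p²` is
nonzero. -/
theorem subset_diagonal_or_card_two_of_index_two {p : ℕ} [Fact p.Prime] (hp : p ≠ 2)
    (G' H' : Subgroup (GL (Fin 2) (ZMod p))) (hle : H' ≤ G')
    (hidx : H'.relIndex G' = 2)
    (hHM : ∀ x ∈ H', ∃ b : (ZMod p)ˣ,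
      (x : Matrix (Fin 2) (Fin 2) (ZMod p)) = !![1, 0; 0, (b : ZMod p)]) :
    (∀ g ∈ G', (g : Matrix (Fin 2) (Fin 2) (ZMod p)) 0 1 = 0 ∧
        (g : Matrix (Fin 2) (Fin 2) (ZMod p)) 1 0 = 0) ∨
      (Nat.card G' = 2 ∧ ∃ v : Fin 2 → ZMod p, v ≠ 0 ∧
        ∀ x ∈ H', Matrix.mulVec (x : Matrix (Fin 2) (Fin 2) (ZMod p)) v = v) :=
  subset_diagonal_or_card_two_of_index_two_general G' H' hle hidx hHM
end

section
/- Let p be an odd prime and G' a subgroup of GL₂(𝔽_p) of order 4. Then either G' contains the matrix diag(−1,−1) = −I, or p ≡ 1 (mod 4) and G' is cyclic of order 4. -/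
/-! Suppose `-1 ∉ G'`. An involution in `SL₂` over a domain with `2 ≠ 0` is `±1`, because it
equals its own adjugate and is therefore scalar. Hence the kernel of `det` on the `2`-group `G'`
has no element of order `2` and is trivial, so `det` embeds `G'` into `𝔽_pˣ`, which is cyclic of
order `p - 1`. -/

open Matrix

theorem Matrix.eq_one_or_eq_neg_one_of_mul_self_eq_one_of_det_eq_one {R : Type*} [CommRing R]
    [IsDomain R] (h2 : (2 : R) ≠ 0) {A : Matrix (Fin 2) (Fin 2) R} (hA : A * A = 1)
    (hdet : A.det = 1) : A = 1 ∨ A = -1 := by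
  have hadj : A.adjugate = A :=
    calc A.adjugate = A * A * A.adjugate := by rw [hA, one_mul]
      _ = A := by rw [mul_assoc, A.mul_adjugate, hdet, one_smul, mul_one]
  obtain ⟨a, b, c, d, rfl⟩ : ∃ a b c d : R, A = !![a, b; c, d] := ⟨_, _, _, _, A.eta_fin_two⟩
  simp only [adjugate_fin_two_of, ← Matrix.ext_iff, Fin.forall_fin_two, of_apply, cons_val',
    cons_val_zero, cons_val_one, empty_val', cons_val_fin_one] at hadj
  obtain ⟨⟨hda, hb⟩, hc, -⟩ := hadj
  have hb : b = 0 := (mul_eq_zero.mp (by linear_combination -hb : (2 : R) * b = 0)).resolve_left h2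
  have hc : c = 0 := (mul_eq_zero.mp (by linear_combination -hc : (2 : R) * c = 0)).resolve_left h2
  subst hb hc hda
  rw [mul_fin_two, one_fin_two] at hA
  simp only [mul_zero, add_zero, zero_mul, zero_add, EmbeddingLike.apply_eq_iff_eq, vecCons_inj,
    and_true, true_and, and_self] at hA
  rcases mul_self_eq_one_iff.mp hA with rfl | rfl
  · left; rw [one_fin_two]
  · right; rw [one_fin_two]; simp

theorem IsPGroup.exists_orderOf_eq_of_ne_bot {p : ℕ} [Fact p.Prime] {G : Type*} [Group G]
    [Finite G] (hG : IsPGroup p G) {H : Subgroup G} (hH : H ≠ ⊥) : ∃ x ∈ H, orderOf x = p := by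
  have : Nontrivial H := (Subgroup.nontrivial_iff_ne_bot H).mpr hH
  obtain ⟨n, hn, hcard⟩ := (hG.to_subgroup H).nontrivial_iff_card.mp this
  obtain ⟨x, hx⟩ := exists_prime_orderOf_dvd_card' (G := H) p (hcard ▸ dvd_pow_self p hn.ne')
  exact ⟨x, x.2, by rwa [Subgroup.orderOf_coe]⟩

theorem Matrix.GeneralLinearGroup.det_comp_subtype_injective_of_neg_one_notMem {K : Type*}
    [Field K] (h2 : (2 : K) ≠ 0) {H : Subgroup (GL (Fin 2) K)} [Finite H] (hH : IsPGroup 2 H)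
    (hneg : -1 ∉ H) : Function.Injective (det.comp H.subtype) := by
  rw [← MonoidHom.ker_eq_bot_iff]
  by_contra hker
  obtain ⟨x, hx, hord⟩ := hH.exists_orderOf_eq_of_ne_bot hker
  obtain ⟨hsq, hx1⟩ := orderOf_eq_prime_iff.mp hord
  have hA : ((x : GL (Fin 2) K) : Matrix (Fin 2) (Fin 2) K) * (x : GL (Fin 2) K) = 1 := by
    simpa [pow_two] using
      congrArg (fun y : H ↦ ((y : GL (Fin 2) K) : Matrix (Fin 2) (Fin 2) K)) hsq
  rcases eq_one_or_eq_neg_one_of_mul_self_eq_one_of_det_eq_one h2 hA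
    (congrArg Units.val hx) with h | h
  · exact hx1 (Subtype.ext (Units.ext h))
  · have hx' : (x : GL (Fin 2) K) = -1 := Units.ext (by simpa using h)
    exact hneg (hx' ▸ x.2)

/-- Corollary 5.14: for `p` an odd prime, a subgroup `G'` of `GL₂(𝔽_p)` of order 4
either contains `-I = diag(-1,-1)`, or `p ≡ 1 (mod 4)` and `G'` is cyclic (of
order 4). -/
theorem neg_one_mem_or_cyclic_of_card_four {p : ℕ} [Fact p.Prime] (hp : p ≠ 2)
    (G' : Subgroup (GL (Fin 2) (ZMod p))) (hcard : Nat.card G' = 4) :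
    (-1 : GL (Fin 2) (ZMod p)) ∈ G' ∨ (p % 4 = 1 ∧ IsCyclic ↥G') := by
  refine or_iff_not_imp_left.mpr fun hneg ↦ ?_
  have : Finite G' := Nat.finite_of_card_ne_zero (by omega)
  have h2 : (2 : ZMod p) ≠ 0 := Ring.two_ne_zero ((ZMod.ringChar_zmod_n p).symm ▸ hp)
  have hinj := GeneralLinearGroup.det_comp_subtype_injective_of_neg_one_notMem h2
    (IsPGroup.of_card (n := 2) hcard) hneg
  have hdvd : 4 ∣ p - 1 := by
    have := Subgroup.card_dvd_of_injective _ hinj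
    rwa [hcard, Nat.card_eq_fintype_card, ZMod.card_units] at this
  have hpos : 0 < p := (Fact.out : p.Prime).pos
  exact ⟨by omega, isCyclic_of_injective _ hinj⟩
end

section
/- Let p be an odd prime and G' a subgroup of GL₂(𝔽_p). Suppose there is a subgroup H' of G' of index 4 whose normal core in G' is trivial. Then the following are equivalent: (i) every subgroup of G' of order 4 is cyclic; (ii) G' is cyclic of order 4. -/
/-!
Acting on the four cosets of the core-free subgroup embeds `G'` into `S₄`. If `|G'| ≠ 4`, then,
as `4 ∣ |G'|`, the image has index at most 3 and therefore contains the normal Klein four-group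
`V₄ ◁ S₄`: an index-3 subgroup is a Sylow 2-subgroup, an index-2 subgroup is `A₄`. Pulling `V₄`
back gives a non-cyclic subgroup of `G'` of order 4.
-/

open Equiv

theorem IsKleinFour.of_mulEquiv {G H : Type*} [Group G] [Group H] [IsKleinFour G] (e : G ≃* H) :
    IsKleinFour H where
  card_four := (Nat.card_congr e.toEquiv).symm.trans IsKleinFour.card_four
  exponent_two := (Monoid.exponent_eq_of_mulEquiv e).symm.trans IsKleinFour.exponent_two

theorem Subgroup.isKleinFour_comap_of_le_range {G M : Type*} [Group G] [Group M] {φ : G →* M}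
    (hφ : Function.Injective φ) {V : Subgroup M} [IsKleinFour V] (hV : V ≤ φ.range) :
    IsKleinFour (V.comap φ) :=
  .of_mulEquiv <| (((V.comap φ).equivMapOfInjective φ hφ).trans
    (MulEquiv.subgroupCongr (Subgroup.map_comap_eq_self hV))).symm

theorem Subgroup.exists_injective_hom_perm_fin_of_normalCore_eq_bot {G : Type*} [Group G]
    {H : Subgroup G} {n : ℕ} [NeZero n] (hH : H.index = n) (hcore : H.normalCore = ⊥) :
    ∃ φ : G →* Perm (Fin n), Function.Injective φ := by
  have : Finite (G ⧸ H) := Nat.finite_of_card_ne_zero (hH.trans_ne (NeZero.ne n))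
  let e := (Finite.equivFinOfCardEq hH).permCongrHom
  refine ⟨e.toMonoidHom.comp (MulAction.toPermHom G (G ⧸ H)), e.injective.comp ?_⟩
  rwa [← MonoidHom.ker_eq_bot_iff, ← Subgroup.normalCore_eq_ker]

namespace Equiv.Perm

def kleinFour : Subgroup (Perm (Fin 4)) :=
  (alternatingGroup.kleinFour (Fin 4)).map (alternatingGroup (Fin 4)).subtype

instance kleinFour_normal : kleinFour.Normal :=
  have := alternatingGroup.characteristic_kleinFour (α := Fin 4) (by simp)
  ConjAct.normal_of_characteristic_of_normal

instance isKleinFour_kleinFour : IsKleinFour kleinFour :=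
  have := alternatingGroup.kleinFour_isKleinFour (α := Fin 4) (by simp)
  .of_mulEquiv <| Subgroup.equivMapOfInjective _ _ Subtype.val_injective

theorem kleinFour_le_alternatingGroup : kleinFour ≤ alternatingGroup (Fin 4) :=
  Subgroup.map_subtype_le _

theorem kleinFour_le_of_index_le_three {Q : Subgroup (Perm (Fin 4))} (hQ : Q.index ≤ 3) :
    kleinFour ≤ Q := by
  have hcard : Q.index * Nat.card Q = 24 := by
    rw [Q.index_mul_card, Nat.card_perm, Nat.card_fin]; rfl
  obtain h | h | h : Q.index = 1 ∨ Q.index = 2 ∨ Q.index = 3 := by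
    have : Q.index ≠ 0 := Subgroup.index_ne_zero_of_finite
    omega
  · rw [Subgroup.index_eq_one.mp h]
    exact le_top
  · rw [eq_alternatingGroup_of_index_eq_two h]
    exact kleinFour_le_alternatingGroup
  · have : Fact (Nat.Prime 2) := ⟨Nat.prime_two⟩
    have hQ2 : IsPGroup 2 Q := IsPGroup.of_card (n := 3) (by rw [h] at hcard; omega)
    have hV2 : IsPGroup 2 kleinFour := IsPGroup.of_card (n := 2) IsKleinFour.card_four
    exact hV2.le_sylow_of_normal (hQ2.toSylow (by rw [h]; decide))

end Equiv.Perm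

namespace Subgroup

variable {G : Type*} [Group G] {H : Subgroup G}

theorem card_eq_four_of_index_eq_four_of_normalCore_eq_bot (hH : H.index = 4)
    (hcore : H.normalCore = ⊥) (hV : ∀ K : Subgroup G, ¬IsKleinFour K) : Nat.card G = 4 := by
  obtain ⟨φ, hφ⟩ := H.exists_injective_hom_perm_fin_of_normalCore_eq_bot hH hcore
  have hcard : φ.range.index * Nat.card G = 24 := by
    have hrange : Nat.card φ.range = Nat.card G := Nat.card_range_of_injective hφ
    rw [← hrange, φ.range.index_mul_card, Nat.card_perm, Nat.card_fin]
    rfl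
  obtain ⟨k, hk⟩ : 4 ∣ Nat.card G := hH ▸ H.index_dvd_card
  by_contra hne
  have hidx : φ.range.index ≤ 3 := by
    rw [hk] at hcard hne
    have : 2 ≤ k := by
      by_contra
      interval_cases k <;> simp_all
    nlinarith
  exact hV _ (isKleinFour_comap_of_le_range hφ (Perm.kleinFour_le_of_index_le_three hidx))

theorem forall_card_eq_four_isCyclic_iff_of_index_eq_four_of_normalCore_eq_bot
    (hH : H.index = 4) (hcore : H.normalCore = ⊥) :
    (∀ K : Subgroup G, Nat.card K = 4 → IsCyclic K) ↔ IsCyclic G ∧ Nat.card G = 4 := by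
  refine ⟨fun hcyc ↦ ?_, fun ⟨_, _⟩ K _ ↦ inferInstance⟩
  have hG : Nat.card G = 4 := card_eq_four_of_index_eq_four_of_normalCore_eq_bot hH hcore
    fun K _ ↦ IsKleinFour.not_isCyclic (hcyc K IsKleinFour.card_four)
  have : IsCyclic (⊤ : Subgroup G) := hcyc ⊤ (by rw [card_top, hG])
  exact ⟨isCyclic_of_surjective topEquiv.toMonoidHom topEquiv.surjective, hG⟩

end Subgroup

theorem all_order_four_cyclic_iff_cyclic_of_card_four_general {p : ℕ}
    (G' H' : Subgroup (GL (Fin 2) (ZMod p)))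
    (hidx : H'.relIndex G' = 4)
    (hcore : (H'.subgroupOf G').normalCore = ⊥) :
    (∀ K : Subgroup ↥G', Nat.card K = 4 → IsCyclic ↥K) ↔
      (IsCyclic ↥G' ∧ Nat.card G' = 4) :=
  Subgroup.forall_card_eq_four_isCyclic_iff_of_index_eq_four_of_normalCore_eq_bot hidx hcore

/-- Lemma 5.15: for `p` an odd prime and `G' ≤ GL₂(𝔽_p)` admitting a subgroup `H'`
of index 4 with trivial normal core in `G'`, all subgroups of `G'` of order 4 are
cyclic iff `G'` is cyclic of order 4. -/
theorem all_order_four_cyclic_iff_cyclic_of_card_four {p : ℕ} [Fact p.Prime]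
    (hp : p ≠ 2) (G' H' : Subgroup (GL (Fin 2) (ZMod p))) (hle : H' ≤ G')
    (hidx : H'.relIndex G' = 4)
    (hcore : (H'.subgroupOf G').normalCore = ⊥) :
    (∀ K : Subgroup ↥G', Nat.card K = 4 → IsCyclic ↥K) ↔
      (IsCyclic ↥G' ∧ Nat.card G' = 4) :=
  all_order_four_cyclic_iff_cyclic_of_card_four_general G' H' hidx hcore
end

section
/- Let G' be a finite group of order coprime to p, V a 2-dimensional 𝔽_p-representation of G', H' a subgroup of G', and L a 1-dimensional H'-stable subspace of V. Suppose: (B) V^{G'} = {0}, and (C) the stabilizer of L in G' acts trivially on L. Then the normal core N^{G'}(H') = ⋂_{g∈G'} gH'g⁻¹ acts trivially on V. -/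
/-!
An element `g` of the normal core of `H'` lies in every conjugate of `H'`, so by (C) it fixes
pointwise every translate `ρ x L` of the line `L`. The line `L` itself is not `G'`-stable,
since otherwise (C) would make its nonzero vectors `G'`-fixed, against (B). So some translate
`ρ x L` differs from `L`, and in the plane `V` these two lines span everything.
-/

theorem Submodule.sup_eq_top_of_not_le_of_finrank_add_one {K V : Type*} [DivisionRing K]
    [AddCommGroup V] [Module K V] {L M : Submodule K V}
    (hL : Module.finrank K L + 1 = Module.finrank K V) (hML : ¬ M ≤ L) : L ⊔ M = ⊤ := by
  have : FiniteDimensional K V := Module.finite_of_finrank_eq_succ hL.symm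
  have hlt : L < L ⊔ M := left_lt_sup.mpr hML
  have hgt := Submodule.finrank_lt_finrank_of_lt hlt
  have hle := Submodule.finrank_le (L ⊔ M)
  exact Submodule.eq_top_of_finrank_eq (by omega)

namespace Representation

variable {K G V : Type*} [CommSemiring K] [Group G] [AddCommMonoid V] [Module K V]
  (ρ : Representation K G V)

theorem apply_apply_eq_of_conj_apply_eq {g x : G} {v : V} (h : ρ (x⁻¹ * g * x) v = v) :
    ρ g (ρ x v) = ρ x v := by
  have := congrArg (ρ x) h
  rwa [map_mul, map_mul, Module.End.mul_apply, Module.End.mul_apply, ← Module.End.mul_apply (ρ x),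
    ← map_mul, mul_inv_cancel, map_one, Module.End.one_apply] at this

theorem map_le_eqLocus_of_mem_normalCore {H : Subgroup G} {L : Submodule K V}
    (hstab : ∀ h ∈ H, ∀ v ∈ L, ρ h v ∈ L)
    (hC : ∀ g : G, (∀ v ∈ L, ρ g v ∈ L) → ∀ v ∈ L, ρ g v = v)
    {g : G} (hg : g ∈ H.normalCore) (x : G) :
    L.map (ρ x) ≤ LinearMap.eqLocus (ρ g) 1 := by
  rintro _ ⟨v, hv, rfl⟩
  have hconj : x⁻¹ * g * x ∈ H := by simpa using hg x⁻¹
  exact ρ.apply_apply_eq_of_conj_apply_eq (hC _ (hstab _ hconj) v hv)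

theorem exists_map_not_le_of_ne_bot {L : Submodule K V} (hL : L ≠ ⊥)
    (hB : ∀ v : V, (∀ g : G, ρ g v = v) → v = 0)
    (hC : ∀ g : G, (∀ v ∈ L, ρ g v ∈ L) → ∀ v ∈ L, ρ g v = v) :
    ∃ x : G, ¬ L.map (ρ x) ≤ L := by
  by_contra! hstable
  obtain ⟨v, hv, hv0⟩ := Submodule.exists_mem_ne_zero_of_ne_bot hL
  exact hv0 (hB v fun x => hC x (fun w hw => hstable x ⟨w, hw, rfl⟩) v hv)

end Representation

theorem normalCore_acts_trivially_general
    (p : ℕ) [Fact p.Prime] {G' : Type*} [Group G']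
    (V : Type*) [AddCommGroup V] [Module (ZMod p) V]
    (hdim : Module.finrank (ZMod p) V = 2)
    (ρ : Representation (ZMod p) G' V)
    (H' : Subgroup G') (L : Submodule (ZMod p) V)
    (hL : Module.finrank (ZMod p) ↥L = 1)
    (hstab : ∀ h ∈ H', ∀ v ∈ L, ρ h v ∈ L)
    (hB : ∀ v : V, (∀ g : G', ρ g v = v) → v = 0)
    (hC : ∀ g : G', (∀ v ∈ L, ρ g v ∈ L) → ∀ v ∈ L, ρ g v = v) :
    ∀ g ∈ H'.normalCore, ∀ v : V, ρ g v = v := by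
  intro g hg v
  have hL_ne_bot : L ≠ ⊥ := by
    rintro rfl
    simp at hL
  obtain ⟨x, hx⟩ := ρ.exists_map_not_le_of_ne_bot hL_ne_bot hB hC
  have hspan : L ⊔ L.map (ρ x) = ⊤ :=
    Submodule.sup_eq_top_of_not_le_of_finrank_add_one (by rw [hL, hdim]) hx
  have hfix : L ⊔ L.map (ρ x) ≤ LinearMap.eqLocus (ρ g) 1 :=
    sup_le (fun w hw => hC g (hstab g (H'.normalCore_le hg)) w hw)
      (ρ.map_le_eqLocus_of_mem_normalCore hstab hC hg x)
  exact hfix (hspan ▸ Submodule.mem_top)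

/-- Corollary 5.12: let `G'` be a finite group of order coprime to `p`, `V` a
2-dimensional `𝔽_p`-representation of `G'`, `H' ≤ G'` and `L` a 1-dimensional
`H'`-stable subspace. If (B) `V^{G'} = 0` and (C) the stabilizer of `L` in `G'`
acts trivially on `L`, then the normal core of `H'` in `G'` acts trivially on
`V`. -/
theorem normalCore_acts_trivially
    (p : ℕ) [Fact p.Prime] {G' : Type*} [Group G'] [Finite G']
    (hp : ¬ p ∣ Nat.card G')
    (V : Type*) [AddCommGroup V] [Module (ZMod p) V]
    (hdim : Module.finrank (ZMod p) V = 2)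
    (ρ : Representation (ZMod p) G' V)
    (H' : Subgroup G') (L : Submodule (ZMod p) V)
    (hL : Module.finrank (ZMod p) ↥L = 1)
    (hstab : ∀ h ∈ H', ∀ v ∈ L, ρ h v ∈ L)
    (hB : ∀ v : V, (∀ g : G', ρ g v = v) → v = 0)
    (hC : ∀ g : G', (∀ v ∈ L, ρ g v ∈ L) → ∀ v ∈ L, ρ g v = v) :
    ∀ g ∈ H'.normalCore, ∀ v : V, ρ g v = v :=
  normalCore_acts_trivially_general p V hdim ρ H' L hL hstab hB hC
end
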